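/- In the two-player beauty contest game, for every player i, every k ≥ 1 and every n ≥ 1, the Δ^κ-rationalization procedure yields Σⁿ_{θ_{ik}} = {(θ_{ik}, 0)}: the unique Δ^κ-rationalizable action of every positive-level type is 0. -/

import Mathlib

open scoped BigOperators
open Classical

noncomputable section

/-- A belief of a player: a probability distribution over
(opponent level-type, opponent action) pairs. -/
structure Belief (B : Type*) where
  p : ℕ × B → ℝ
  nonneg : ∀ x, 0 ≤ p x
  hasSum_one : HasSum p 1

/-- Marginal probability assigned to the opponent's level-`t` type. -/
def Belief.marg {B : Type*} [Fintype B] (μ : Belief B) (t : ℕ) : ℝ := ∑ b : B, μ.p (t, b)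

/-- Probability assigned by a belief to a set of (level, action) pairs. -/
def Belief.probOn {B : Type*} (μ : Belief B) (S : Set (ℕ × B)) : ℝ := ∑' x, S.indicator μ.p x

/-- `f` normalized to the levels `0, …, k-1` (denoted `f^k` in the paper). -/
def fnorm (f : ℕ → ℝ) (k t : ℕ) : ℝ := f t / ∑ ℓ ∈ Finset.range k, f ℓ

/-- Membership in `Δ^{θ_{ik}}`: conditions K1–K3 for `k ≥ 1`; no restriction for `k = 0`. -/
def memDelta {B : Type*} [Fintype B] (f : ℕ → ℝ) (k : ℕ) (μ : Belief B) : Prop :=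
  k ≠ 0 →
    ((∀ t, k ≤ t → μ.marg t = 0) ∧
     (0 < μ.marg 0 → ∀ b : B, μ.p (0, b) / μ.marg 0 = 1 / (Fintype.card B : ℝ)) ∧
     (∀ t, t < k → μ.marg t = fnorm f k t))

/-- Expected payoff of own action `a` for the own level-`k` type given belief `μ`:
the level-0 type's payoff is constant `0`, all other types get `v`. -/
def expPay {A B : Type*} (v : A → B → ℝ) (k : ℕ) (μ : Belief B) (a : A) : ℝ :=
  ∑' x : ℕ × B, μ.p x * (if k = 0 then 0 else v a x.2)

/-- `a` is a best response to belief `μ` under the own level-`k` type. -/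
def isBR {A B : Type*} (v : A → B → ℝ) (k : ℕ) (μ : Belief B) (a : A) : Prop :=
  ∀ a' : A, expPay v k μ a' ≤ expPay v k μ a

/-- The Δ^κ-rationalization procedure; component 1 is player 1's set of surviving
(level, action) pairs, component 2 is player 2's. -/
def SigmaProc {A B : Type*} [Fintype A] [Fintype B]
    (v1 : A → B → ℝ) (v2 : B → A → ℝ) (f : ℕ → ℝ) :
    ℕ → Set (ℕ × A) × Set (ℕ × B)
  | 0 => (Set.univ, Set.univ)
  | n + 1 =>
      let P := SigmaProc v1 v2 f n
      ({x | x ∈ P.1 ∧ ∃ μ : Belief B, memDelta f x.1 μ ∧ μ.probOn P.2 = 1 ∧ isBR v1 x.1 μ x.2},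
       {y | y ∈ P.2 ∧ ∃ μ : Belief A, memDelta f y.1 μ ∧ μ.probOn P.1 = 1 ∧ isBR v2 y.1 μ y.2})

/-- The section `Σⁿ_{θ_{1k}}` of player 1 (as a set of actions). -/
def SigmaSec1 {A B : Type*} [Fintype A] [Fintype B]
    (v1 : A → B → ℝ) (v2 : B → A → ℝ) (f : ℕ → ℝ) (n k : ℕ) : Set A :=
  {a | (k, a) ∈ (SigmaProc v1 v2 f n).1}

/-- The section `Σⁿ_{θ_{2k}}` of player 2 (as a set of actions). -/
def SigmaSec2 {A B : Type*} [Fintype A] [Fintype B]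
    (v1 : A → B → ℝ) (v2 : B → A → ℝ) (f : ℕ → ℝ) (n k : ℕ) : Set B :=
  {b | (k, b) ∈ (SigmaProc v1 v2 f n).2}

/-- The CH-procedure requirement on beliefs at step `n+1`, given the previous
sections `Ψⁿ` of the opponent: the support of `μ` equals `∪_{t=0}^{n} Ψⁿ_{θ_{-i,t}}`
and `μ` is conditionally uniform over each `Ψⁿ_{θ_{-i,t}}`. -/
def CHBelief {B : Type*} (Ψ : ℕ → Set B) (n : ℕ) (μ : Belief B) : Prop :=
  (∀ x : ℕ × B, μ.p x ≠ 0 ↔ x.1 ≤ n ∧ x.2 ∈ Ψ x.1) ∧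
  (∀ t, t ≤ n → ∀ b b' : B, b ∈ Ψ t → b' ∈ Ψ t → μ.p (t, b) = μ.p (t, b'))

/-- The CH-procedure: step `n` returns, for each player and each level `k`,
the set of actions in `Ψⁿ_{θ_{ik}}`. -/
def CHProc {A B : Type*} [Fintype A] [Fintype B]
    (v1 : A → B → ℝ) (v2 : B → A → ℝ) (f : ℕ → ℝ) :
    ℕ → (ℕ → Set A) × (ℕ → Set B)
  | 0 => (fun _ => Set.univ, fun _ => Set.univ)
  | n + 1 =>
      let P := CHProc v1 v2 f n
      (fun k =>
        if k = n + 1 then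
          {a | ∃ μ : Belief B, memDelta f (n + 1) μ ∧ CHBelief P.2 n μ ∧ isBR v1 (n + 1) μ a}
        else P.1 k,
       fun k =>
        if k = n + 1 then
          {b | ∃ μ : Belief A, memDelta f (n + 1) μ ∧ CHBelief P.1 n μ ∧ isBR v2 (n + 1) μ b}
        else P.2 k)

/-- `Ψⁿ_{θ_{1k}}` for player 1 (as a set of actions). -/
def CHSec1 {A B : Type*} [Fintype A] [Fintype B]
    (v1 : A → B → ℝ) (v2 : B → A → ℝ) (f : ℕ → ℝ) (n k : ℕ) : Set A :=
  (CHProc v1 v2 f n).1 k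

/-- `Ψⁿ_{θ_{2k}}` for player 2 (as a set of actions). -/
def CHSec2 {A B : Type*} [Fintype A] [Fintype B]
    (v1 : A → B → ℝ) (v2 : B → A → ℝ) (f : ℕ → ℝ) (n k : ℕ) : Set B :=
  (CHProc v1 v2 f n).2 k

end


/-- The target `a* = (2/3)·(a₁+a₂)/2` in the beauty contest game. -/
noncomputable def bcStar (a b : Fin 101) : ℝ := (2 / 3) * (((a : ℕ) + (b : ℕ) : ℝ) / 2)

/-- Beauty contest payoff: the player closer to `a*` (weakly) wins 1, else 0. -/
noncomputable def bcPay (a b : Fin 101) : ℝ :=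
  if |((a : ℕ) : ℝ) - bcStar a b| ≤ |((b : ℕ) : ℝ) - bcStar a b| then 1 else 0

/-!
Against any opponent action `b`, the action `0` is at least as close to the target
`(a + b) / 3` as the opponent is, so it wins with certainty and is a best response of
every type to every belief. Any other action `a` loses to the opponent action `0`,
which a level-0 opponent plays with positive probability under every belief of
`Δ^{θ_k}`, `k ≥ 1`; hence `0` is the only best response of a positive level already
in the first round. Conversely, the pairs `(θ_0, a)` and `(θ_k, 0)` survive every
round: the level-0 type is indifferent between all actions, and `(θ_k, 0)` is
supported by the belief that puts uniform mass on level-0 actions and lets all higher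
levels play `0`.
-/

open Finset

section Rationalization

variable {A B : Type*}

lemma fnorm_pos {f : ℕ → ℝ} (hf : ∀ n, 0 < f n) {k : ℕ} (hk : k ≠ 0) (t : ℕ) :
    0 < fnorm f k t :=
  div_pos (hf t) (sum_pos (fun i _ => hf i) (nonempty_range_iff.mpr hk))

lemma sum_range_fnorm {f : ℕ → ℝ} (hf : ∀ n, 0 < f n) {k : ℕ} (hk : k ≠ 0) :
    ∑ t ∈ range k, fnorm f k t = 1 := by
  unfold fnorm
  rw [← sum_div, div_self (sum_pos (fun i _ => hf i) (nonempty_range_iff.mpr hk)).ne']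

lemma Belief.probOn_eq_one_of_support_subset (μ : Belief B) {S : Set (ℕ × B)}
    (h : Function.support μ.p ⊆ S) : μ.probOn S = 1 := by
  rw [Belief.probOn, Set.indicator_eq_self.mpr h, μ.hasSum_one.tsum_eq]

lemma Belief.summable_mul [Finite B] (μ : Belief B) (g : B → ℝ) :
    Summable fun x : ℕ × B => μ.p x * g x.2 := by
  obtain ⟨C, hC⟩ := Finite.exists_le fun b => |g b|
  refine (μ.hasSum_one.summable.mul_right C).of_norm_bounded fun x => ?_
  rw [Real.norm_eq_abs, abs_mul, abs_of_nonneg (μ.nonneg x)]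
  exact mul_le_mul_of_nonneg_left (hC x.2) (μ.nonneg x)

lemma Belief.pos_of_memDelta [Fintype B] {f : ℕ → ℝ} (hf : ∀ n, 0 < f n) {k : ℕ}
    (hk : k ≠ 0) {μ : Belief B} (hμ : memDelta f k μ) (b : B) : 0 < μ.p (0, b) := by
  obtain ⟨-, hK2, hK3⟩ := hμ hk
  have hmarg : 0 < μ.marg 0 := hK3 0 (Nat.pos_of_ne_zero hk) ▸ fnorm_pos hf hk 0
  have hcard : (0 : ℝ) < Fintype.card B := Nat.cast_pos.mpr (Fintype.card_pos_iff.mpr ⟨b⟩)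
  have hb := hK2 hmarg b
  rw [div_eq_iff hmarg.ne'] at hb
  rw [hb]
  positivity

lemma expPay_zero_level (v : A → B → ℝ) (μ : Belief B) (a : A) : expPay v 0 μ a = 0 := by
  simp [expPay]

lemma expPay_le_expPay [Finite B] {v : A → B → ℝ} (k : ℕ) (μ : Belief B) {a a' : A}
    (h : ∀ b, v a' b ≤ v a b) : expPay v k μ a' ≤ expPay v k μ a := by
  refine (μ.summable_mul fun b => if k = 0 then 0 else v a' b).tsum_le_tsum (fun x => ?_)
    (μ.summable_mul fun b => if k = 0 then 0 else v a b)
  split_ifs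
  · rfl
  · exact mul_le_mul_of_nonneg_left (h x.2) (μ.nonneg x)

lemma expPay_lt_expPay [Finite B] {v : A → B → ℝ} {k : ℕ} (hk : k ≠ 0) {μ : Belief B}
    {a a' : A} (h : ∀ b, v a' b ≤ v a b) {x : ℕ × B} (hx : 0 < μ.p x)
    (hlt : v a' x.2 < v a x.2) : expPay v k μ a' < expPay v k μ a := by
  refine (μ.summable_mul fun b => if k = 0 then 0 else v a' b).tsum_lt_tsum (i := x)
    (fun y => ?_) ?_ (μ.summable_mul fun b => if k = 0 then 0 else v a b)
  · simp only [if_neg hk]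
    exact mul_le_mul_of_nonneg_left (h y.2) (μ.nonneg y)
  · simpa only [if_neg hk] using mul_lt_mul_of_pos_left hlt hx

lemma isBR_zero_level (v : A → B → ℝ) (μ : Belief B) (a : A) : isBR v 0 μ a := fun a' => by
  rw [expPay_zero_level, expPay_zero_level]

lemma isBR_of_dominant [Finite B] {v : A → B → ℝ} {a₀ : A} (hdom : ∀ a b, v a b ≤ v a₀ b)
    (k : ℕ) (μ : Belief B) : isBR v k μ a₀ := fun _ =>
  expPay_le_expPay k μ (hdom _)

/-- Strict dominance at a single opponent action suffices, because a level-0 opponent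
plays every action with positive probability. -/
lemma isBR_iff_eq_of_dominant [Fintype B] {v : A → B → ℝ} {f : ℕ → ℝ} (hf : ∀ n, 0 < f n)
    {k : ℕ} (hk : k ≠ 0) {μ : Belief B} (hμ : memDelta f k μ) {a₀ : A}
    (hdom : ∀ a b, v a b ≤ v a₀ b) (hstrict : ∀ a ≠ a₀, ∃ b, v a b < v a₀ b) {a : A} :
    isBR v k μ a ↔ a = a₀ := by
  refine ⟨fun hbr => ?_, fun ha => ha ▸ isBR_of_dominant hdom k μ⟩
  by_contra ha
  obtain ⟨b, hb⟩ := hstrict a ha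
  have hlt := expPay_lt_expPay hk (hdom a) (x := (0, b)) (Belief.pos_of_memDelta hf hk hμ b) hb
  exact (hbr a₀).not_gt hlt

lemma sigmaProc_fst_antitone (v1 : A → B → ℝ) (v2 : B → A → ℝ) (f : ℕ → ℝ)
    [Fintype A] [Fintype B] : Antitone fun n => (SigmaProc v1 v2 f n).1 :=
  antitone_nat_of_succ_le fun _ _ hx => hx.1

lemma sigmaProc_fst_eq_snd [Fintype B] (v : B → B → ℝ) (f : ℕ → ℝ) :
    ∀ n, (SigmaProc v v f n).1 = (SigmaProc v v f n).2
  | 0 => rfl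
  | n + 1 => by
    simp only [SigmaProc]
    rw [sigmaProc_fst_eq_snd v f n]

end Rationalization

section LevelBelief

variable {B : Type*} [Fintype B]

/-- Indexed by `k` for the level-`(k+1)` type holding it: level-0 opponents play
uniformly, higher levels play `b₀`. -/
noncomputable def levelBeliefMass (f : ℕ → ℝ) (k : ℕ) (b₀ : B) (x : ℕ × B) : ℝ :=
  if x.1 ≤ k then
    fnorm f (k + 1) x.1 * (if x.1 = 0 then (Fintype.card B : ℝ)⁻¹ else if x.2 = b₀ then 1 else 0)
  else 0

lemma sum_levelBeliefMass (f : ℕ → ℝ) (k : ℕ) (b₀ : B) (t : ℕ) :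
    ∑ b, levelBeliefMass f k b₀ (t, b) = if t ≤ k then fnorm f (k + 1) t else 0 := by
  have hcard : (Fintype.card B : ℝ) ≠ 0 :=
    Nat.cast_ne_zero.mpr (Fintype.card_pos_iff.mpr ⟨b₀⟩).ne'
  by_cases htk : t ≤ k
  · rcases eq_or_ne t 0 with rfl | ht
    · simp [levelBeliefMass]
      field_simp
    · simp [levelBeliefMass, htk, ht]
  · simp [levelBeliefMass, htk]

lemma hasSum_levelBeliefMass {f : ℕ → ℝ} (hf : ∀ n, 0 < f n) (k : ℕ) (b₀ : B) :
    HasSum (levelBeliefMass f k b₀) 1 := by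
  have hzero : ∀ x ∉ range (k + 1) ×ˢ (univ : Finset B), levelBeliefMass f k b₀ x = 0 := by
    intro x hx
    have : ¬ x.1 ≤ k := by simpa [Nat.lt_succ_iff] using hx
    simp [levelBeliefMass, this]
  have hsum : ∑ x ∈ range (k + 1) ×ˢ univ, levelBeliefMass f k b₀ x = 1 := by
    rw [sum_product, ← sum_range_fnorm hf k.succ_ne_zero]
    refine sum_congr rfl fun t ht => ?_
    rw [sum_levelBeliefMass, if_pos (Nat.lt_succ_iff.mp (mem_range.mp ht))]
  exact hsum ▸ hasSum_sum_of_ne_finset_zero hzero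

noncomputable def levelBelief {f : ℕ → ℝ} (hf : ∀ n, 0 < f n) (k : ℕ) (b₀ : B) : Belief B where
  p := levelBeliefMass f k b₀
  nonneg x := by
    unfold levelBeliefMass
    have := fnorm_pos hf k.succ_ne_zero x.1
    split_ifs <;> positivity
  hasSum_one := hasSum_levelBeliefMass hf k b₀

lemma levelBelief_memDelta {f : ℕ → ℝ} (hf : ∀ n, 0 < f n) (k : ℕ) (b₀ : B) :
    memDelta f (k + 1) (levelBelief hf k b₀) := by
  have hmarg (t : ℕ) : (levelBelief hf k b₀).marg t = if t ≤ k then fnorm f (k + 1) t else 0 :=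
    sum_levelBeliefMass f k b₀ t
  refine fun _ => ⟨fun t ht => ?_, fun _ b => ?_, fun t ht => ?_⟩
  · rw [hmarg, if_neg (by omega)]
  · have hpos := fnorm_pos hf k.succ_ne_zero 0
    simp only [hmarg, if_pos (Nat.zero_le k)]
    simp only [levelBelief, levelBeliefMass, if_pos (Nat.zero_le k), if_true]
    field_simp
  · rw [hmarg, if_pos (by omega)]

lemma levelBelief_support {f : ℕ → ℝ} (hf : ∀ n, 0 < f n) (k : ℕ) (b₀ : B) :
    Function.support (levelBelief hf k b₀).p ⊆ {x | x.1 = 0 ∨ x.2 = b₀} := by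
  intro x hx
  by_contra h
  simp only [Set.mem_ofPred_eq, not_or] at h
  exact hx (by simp [levelBelief, levelBeliefMass, h.1, h.2])

lemma mem_sigmaProc_of_dominant {v : B → B → ℝ} {f : ℕ → ℝ} (hf : ∀ n, 0 < f n) {b₀ : B}
    (hdom : ∀ a b, v a b ≤ v b₀ b) (n : ℕ) {x : ℕ × B} (hx : x.1 = 0 ∨ x.2 = b₀) :
    x ∈ (SigmaProc v v f n).1 := by
  induction n generalizing x with
  | zero => trivial
  | succ n ih =>
    have hprob (k : ℕ) : (levelBelief hf k b₀).probOn (SigmaProc v v f n).2 = 1 := by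
      refine Belief.probOn_eq_one_of_support_subset _ fun y hy => ?_
      rw [← sigmaProc_fst_eq_snd]
      exact ih (levelBelief_support hf k b₀ hy)
    refine ⟨ih hx, ?_⟩
    rcases x with ⟨_ | k, b⟩
    · exact ⟨levelBelief hf 0 b₀, fun h => absurd rfl h, hprob 0, isBR_zero_level v _ b⟩
    · rw [show b = b₀ from hx.resolve_left k.succ_ne_zero]
      exact ⟨levelBelief hf k b₀, levelBelief_memDelta hf k b₀, hprob k,
        isBR_of_dominant hdom _ _⟩

end LevelBelief

section BeautyContest

/-- Since the target is `(a + b) / 3`, the inequality `|a - (a + b)/3| ≤ |b - (a + b)/3|`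
squares to `0 ≤ (b - a) (a + b)`. -/
lemma bcPay_eq_ite (a b : Fin 101) : bcPay a b = if a ≤ b then 1 else 0 := by
  have ha : (0 : ℝ) ≤ (a : ℕ) := Nat.cast_nonneg _
  have hb : (0 : ℝ) ≤ (b : ℕ) := Nat.cast_nonneg _
  have key : |((a : ℕ) : ℝ) - bcStar a b| ≤ |((b : ℕ) : ℝ) - bcStar a b| ↔ a ≤ b := by
    rw [← sq_le_sq, bcStar, Fin.le_def, ← @Nat.cast_le ℝ]
    constructor
    · intro h
      by_contra hab
      nlinarith
    · intro h
      nlinarith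
  simp only [bcPay, key]

lemma bcPay_le_bcPay_zero (a b : Fin 101) : bcPay a b ≤ bcPay 0 b := by
  simp only [bcPay_eq_ite, Fin.zero_le, if_true]
  split_ifs <;> norm_num

lemma bcPay_lt_bcPay_zero {a : Fin 101} (ha : a ≠ 0) : bcPay a 0 < bcPay 0 0 := by
  simp [bcPay_eq_ite, ha]

end BeautyContest

theorem beauty_contest_sigma_general
    (f : ℕ → ℝ) (hf : ∀ n, 0 < f n) :
    ∀ n k : ℕ, 1 ≤ n → 1 ≤ k →
      SigmaSec1 bcPay bcPay f n k = {0} ∧ SigmaSec2 bcPay bcPay f n k = {0} := by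
  intro n k hn hk
  have hsec1 : SigmaSec1 bcPay bcPay f n k = {0} := by
    ext a
    refine ⟨fun ha => ?_, fun ha => ?_⟩
    · obtain ⟨-, μ, hμ, -, hbr⟩ := sigmaProc_fst_antitone bcPay bcPay f hn ha
      exact (isBR_iff_eq_of_dominant hf (by omega) hμ bcPay_le_bcPay_zero
        fun a ha => ⟨0, bcPay_lt_bcPay_zero ha⟩).mp hbr
    · rw [Set.mem_singleton_iff.mp ha]
      exact mem_sigmaProc_of_dominant hf bcPay_le_bcPay_zero n (Or.inr rfl)
  refine ⟨hsec1, ?_⟩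
  rw [← hsec1, SigmaSec1, SigmaSec2, sigmaProc_fst_eq_snd]

/-- in the beauty contest game, for every n ≥ 1 and k ≥ 1, the unique
Δ^κ-rationalizable action of the level-k type of each player is 0. -/
theorem beauty_contest_sigma
    (f : ℕ → ℝ) (hf : ∀ n, 0 < f n) (hfsum : HasSum f 1) :
    ∀ n k : ℕ, 1 ≤ n → 1 ≤ k →
      SigmaSec1 bcPay bcPay f n k = {0} ∧ SigmaSec2 bcPay bcPay f n k = {0} :=
  beauty_contest_sigma_general f hf
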